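/- Let M be a map and e an edge of M. Then deletion of e in the dual map corresponds to contraction of e in M, and vice versa: (M/e)* = M*∖e and (M∖e)* = M*/e. -/

import Mathlib

/-- The permutation (as a function) of the premap obtained by deleting the edge `e`:
skip crosses of `e` when traversing cycles of `τ` (at most two crosses of an edge lie
on a cycle, so at most three steps are needed). -/
def delP {C : Type*} [DecidableEq C] (τ : C → C) (e : Finset C) (b : C) : C :=
  if τ b ∉ e then τ b
  else if τ (τ b) ∉ e then τ (τ b)
  else τ (τ (τ b))

/-- The permutation (as a function) of the premap obtained by contracting the edge `e`:
insert `θσ` whenever a cross of `e` is skipped. -/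
def contrP {C : Type*} [DecidableEq C] (θ σ τ : C → C) (e : Finset C) (b : C) : C :=
  if τ b ∉ e then τ b
  else if τ (θ (σ (τ b))) ∉ e then τ (θ (σ (τ b)))
  else τ (θ (σ (τ (θ (σ (τ b))))))

/-!
Both identities hold by unfolding: the dual's third permutation `τθσ`, started at `b`, visits
exactly the crosses that `τ` interleaved with `θσ` visits when started at `θσ b`; and the `σθ`
that contraction inserts in the dual cancels against the `θσ` built into `τθσ`, since `θ` and `σ`
are involutions.
-/

theorem Equiv.Perm.involutive_of_mul_self_eq_one {C : Type*} {f : Equiv.Perm C}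
    (h : f * f = 1) : Function.Involutive f :=
  fun x => by simpa using DFunLike.congr_fun h x

section

variable {C : Type*} [DecidableEq C] (τ : C → C) (e : Finset C)

theorem contrP_comp_eq_delP_comp (θ σ : C → C) (b : C) :
    contrP θ σ τ e (θ (σ b)) = delP (τ ∘ θ ∘ σ) e b :=
  rfl

theorem delP_comp_eq_contrP_comp {θ σ : C → C} (hθ : Function.Involutive θ)
    (hσ : Function.Involutive σ) (b : C) :
    delP τ e (θ (σ b)) = contrP σ θ (τ ∘ θ ∘ σ) e b := by
  simp only [delP, contrP, Function.comp_apply, hθ _, hσ _]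

end

theorem contract_dual_delete_general {C : Type*} [DecidableEq C]
    (θ σ τ : Equiv.Perm C)
    (hθ : θ * θ = 1) (hσ : σ * σ = 1)
    (e : Finset C) :
    ∀ b : C, b ∉ e →
      -- `(M/e)* = M*∖e`
      (contrP (⇑θ) (⇑σ) (⇑τ) e (θ (σ b)) = delP (⇑(τ * θ * σ)) e b) ∧
      -- `(M∖e)* = M*/e`
      (delP (⇑τ) e (θ (σ b)) = contrP (⇑σ) (⇑θ) (⇑(τ * θ * σ)) e b) := by
  intro b _
  rw [Equiv.Perm.coe_mul, Equiv.Perm.coe_mul]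
  exact ⟨contrP_comp_eq_delP_comp τ e θ σ b,
    delP_comp_eq_contrP_comp τ e (Equiv.Perm.involutive_of_mul_self_eq_one hθ)
      (Equiv.Perm.involutive_of_mul_self_eq_one hσ) b⟩

/-- For a premap `M = (θ, σ, τ; C)` with dual `M* = (σ, θ, τθσ; C)` and an edge
`e = {a, θa, σa, θσa}`, deletion in the dual corresponds to contraction and vice versa:
`(M/e)* = M*∖e` and `(M∖e)* = M*/e` (expressed via the third permutations of these
premaps, all acting on the crosses outside `e`; the first two permutations agree by
definition). -/
theorem contract_dual_delete {C : Type*} [DecidableEq C] [Fintype C]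
    (θ σ τ : Equiv.Perm C)
    (hθ : θ * θ = 1) (hσ : σ * σ = 1) (hcomm : θ * σ = σ * θ)
    (hτσ : τ * σ = σ * τ⁻¹)
    (hdistinct : ∀ a : C, [a, θ a, σ a, θ (σ a)].Nodup)
    (horb : ∀ (a : C) (k : ℤ), (τ ^ k) a ≠ σ a)
    (a : C) (e : Finset C) (he : e = {a, θ a, σ a, θ (σ a)}) :
    ∀ b : C, b ∉ e →
      -- `(M/e)* = M*∖e`
      (contrP (⇑θ) (⇑σ) (⇑τ) e (θ (σ b)) = delP (⇑(τ * θ * σ)) e b) ∧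
      -- `(M∖e)* = M*/e`
      (delP (⇑τ) e (θ (σ b)) = contrP (⇑σ) (⇑θ) (⇑(τ * θ * σ)) e b) :=
  contract_dual_delete_general θ σ τ hθ hσ e
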